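/- arXiv:2210.01596 — 4 statements merged into one kernel-verified Lean document; each statement's English description precedes it below -/
import Mathlib

section
/- With the notation above, LGW_S(X,Y)^{1/2} ≤ GW(S,X) + GW(S,Y), i.e. the linear Gromov–Wasserstein distance with reference S is bounded above by the sum of the GW distances from S to X and from S to Y. -/
open MeasureTheory Filter Topology

/-- The Gromov–Wasserstein cost of a plan `π` on `X × Y`. -/
noncomputable def gwCost {X Y : Type*} [PseudoMetricSpace X] [PseudoMetricSpace Y]
    [MeasurableSpace X] [MeasurableSpace Y] (π : Measure (X × Y)) : ℝ :=
  ∫ p, ∫ q, (dist p.1 q.1 - dist p.2 q.2) ^ 2 ∂π ∂π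

/-- `π` is a coupling of `μ` and `ν`. -/
def IsCoupling {X Y : Type*} [MeasurableSpace X] [MeasurableSpace Y]
    (π : Measure (X × Y)) (μ : Measure X) (ν : Measure Y) : Prop :=
  π.map Prod.fst = μ ∧ π.map Prod.snd = ν

/-- The squared Gromov–Wasserstein distance. -/
noncomputable def gwSq {X Y : Type*} [PseudoMetricSpace X] [PseudoMetricSpace Y]
    [MeasurableSpace X] [MeasurableSpace Y] (μ : Measure X) (ν : Measure Y) : ℝ :=
  sInf {c | ∃ π : Measure (X × Y), IsCoupling π μ ν ∧ c = gwCost π}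

/-- `π` is an optimal Gromov–Wasserstein plan between `μ` and `ν`. -/
def IsOptGW {X Y : Type*} [PseudoMetricSpace X] [PseudoMetricSpace Y]
    [MeasurableSpace X] [MeasurableSpace Y]
    (π : Measure (X × Y)) (μ : Measure X) (ν : Measure Y) : Prop :=
  IsCoupling π μ ν ∧ gwCost π = gwSq μ ν

/-- The LGW objective of a three-plan on `S × X × Y`:
`∬ |d_X(x,x') − d_Y(y,y')|² dπ dπ`. -/
noncomputable def lgwCost {S X Y : Type*} [PseudoMetricSpace X] [PseudoMetricSpace Y]
    [MeasurableSpace S] [MeasurableSpace X] [MeasurableSpace Y]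
    (π : Measure (S × X × Y)) : ℝ :=
  ∫ p, ∫ q, (dist p.2.1 q.2.1 - dist p.2.2 q.2.2) ^ 2 ∂π ∂π

/-- The linear Gromov–Wasserstein value with reference `(S, σ)`:
infimum of the LGW objective over three-plans whose `(S,X)`- and `(S,Y)`-marginals
are optimal GW plans. -/
noncomputable def lgw {S X Y : Type*} [PseudoMetricSpace S] [PseudoMetricSpace X]
    [PseudoMetricSpace Y] [MeasurableSpace S] [MeasurableSpace X] [MeasurableSpace Y]
    (σ : Measure S) (μ : Measure X) (ν : Measure Y) : ℝ :=
  sInf {c | ∃ π : Measure (S × X × Y),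
    IsOptGW (π.map (fun p => (p.1, p.2.1))) σ μ ∧
    IsOptGW (π.map (fun p => (p.1, p.2.2))) σ ν ∧
    c = lgwCost π}

/-!
Every three-plan `π` admissible for `lgw` has optimal `(S,X)`- and `(S,Y)`-marginals, and its LGW
cost is the GW cost of its `(X,Y)`-marginal. Writing `d_X − d_Y = (d_X − d_S) + (d_S − d_Y)` on
`(S × X × Y)²`, Minkowski's inequality in `L²(π ⊗ π)` bounds the square root of that cost by
`GW(S,X) + GW(S,Y)`. No gluing is needed: if there is no admissible plan, `lgw` is `sInf ∅ = 0`.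
-/

section Minkowski

variable {α : Type*} [MeasurableSpace α] {μ : Measure α}

theorem MeasureTheory.MemLp.sqrt_integral_sq_eq_norm_toLp {f : α → ℝ} (hf : MemLp f 2 μ) :
    √(∫ x, f x ^ 2 ∂μ) = ‖hf.toLp f‖ := by
  rw [← Real.sqrt_sq (norm_nonneg _), ← real_inner_self_eq_norm_sq, L2.inner_def]
  congr 1
  refine integral_congr_ae ?_
  filter_upwards [hf.coeFn_toLp] with x hx
  simp [hx, sq]

theorem sqrt_integral_add_sq_le {f g : α → ℝ} (hf : MemLp f 2 μ) (hg : MemLp g 2 μ) :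
    √(∫ x, (f x + g x) ^ 2 ∂μ) ≤ √(∫ x, f x ^ 2 ∂μ) + √(∫ x, g x ^ 2 ∂μ) :=
  calc √(∫ x, (f x + g x) ^ 2 ∂μ) = ‖(hf.add hg).toLp (f + g)‖ :=
        (hf.add hg).sqrt_integral_sq_eq_norm_toLp
    _ = ‖hf.toLp f + hg.toLp g‖ := by rw [MemLp.toLp_add]
    _ ≤ ‖hf.toLp f‖ + ‖hg.toLp g‖ := norm_add_le _ _
    _ = √(∫ x, f x ^ 2 ∂μ) + √(∫ x, g x ^ 2 ∂μ) := by
        rw [hf.sqrt_integral_sq_eq_norm_toLp, hg.sqrt_integral_sq_eq_norm_toLp]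

end Minkowski

theorem IsCoupling.isFiniteMeasure {X Y : Type*} [MeasurableSpace X] [MeasurableSpace Y]
    {π : Measure (X × Y)} {μ : Measure X} {ν : Measure Y} [IsFiniteMeasure μ]
    (h : IsCoupling π μ ν) : IsFiniteMeasure π :=
  have : IsFiniteMeasure (π.map Prod.fst) := h.1 ▸ ‹_›
  Measure.isFiniteMeasure_of_map measurable_fst.aemeasurable

section GWCost

variable {S X Y : Type*}
  [PseudoMetricSpace S] [CompactSpace S] [MeasurableSpace S] [BorelSpace S]
  [PseudoMetricSpace X] [CompactSpace X] [MeasurableSpace X] [BorelSpace X]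
  [PseudoMetricSpace Y] [CompactSpace Y] [MeasurableSpace Y] [BorelSpace Y]

theorem gwCost_eq_integral_prod (π : Measure (X × Y)) [IsFiniteMeasure π] :
    gwCost π = ∫ r, (dist r.1.1 r.2.1 - dist r.1.2 r.2.2) ^ 2 ∂(π.prod π) :=
  (integral_prod _ ((by fun_prop : Continuous fun r : (X × Y) × (X × Y) =>
    (dist r.1.1 r.2.1 - dist r.1.2 r.2.2) ^ 2).integrable_of_hasCompactSupport
      (.of_compactSpace _))).symm

theorem gwCost_map {Z : Type*} [MeasurableSpace Z] (π : Measure Z) [IsFiniteMeasure π]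
    {φ : Z → X × Y} (hφ : Measurable φ) :
    gwCost (π.map φ) =
      ∫ r, (dist (φ r.1).1 (φ r.2).1 - dist (φ r.1).2 (φ r.2).2) ^ 2 ∂(π.prod π) := by
  rw [gwCost_eq_integral_prod, Measure.map_prod_map _ _ hφ hφ,
    integral_map (hφ.prodMap hφ).aemeasurable (Continuous.aestronglyMeasurable (by fun_prop))]
  rfl

theorem lgwCost_eq_gwCost_map_snd (π : Measure (S × X × Y)) [IsFiniteMeasure π] :
    lgwCost π = gwCost (π.map Prod.snd) := by
  rw [gwCost_map π measurable_snd, lgwCost, integral_prod]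
  exact (by fun_prop : Continuous fun r : (S × X × Y) × (S × X × Y) =>
    (dist r.1.2.1 r.2.2.1 - dist r.1.2.2 r.2.2.2) ^ 2).integrable_of_hasCompactSupport
      (.of_compactSpace _)

theorem sqrt_gwCost_map_snd_le (π : Measure (S × X × Y)) [IsFiniteMeasure π] :
    √(gwCost (π.map Prod.snd)) ≤
      √(gwCost (π.map fun p => (p.1, p.2.1))) + √(gwCost (π.map fun p => (p.1, p.2.2))) := by
  have memLp_two {f : (S × X × Y) × (S × X × Y) → ℝ} (hf : Continuous f) :
      MemLp f 2 (π.prod π) :=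
    hf.memLp_of_hasCompactSupport (.of_compactSpace _)
  rw [gwCost_map π measurable_snd, gwCost_map π (by fun_prop), gwCost_map π (by fun_prop)]
  convert sqrt_integral_add_sq_le
    (memLp_two (by fun_prop : Continuous fun r => dist r.1.2.1 r.2.2.1 - dist r.1.1 r.2.1))
    (memLp_two (by fun_prop : Continuous fun r => dist r.1.1 r.2.1 - dist r.1.2.2 r.2.2.2))
    using 5 <;> ring

end GWCost

theorem lgw_le_of_forall_lgwCost_le {S X Y : Type*} [PseudoMetricSpace S] [PseudoMetricSpace X]
    [PseudoMetricSpace Y] [MeasurableSpace S] [MeasurableSpace X] [MeasurableSpace Y]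
    {σ : Measure S} {μ : Measure X} {ν : Measure Y} {B : ℝ} (hB : 0 ≤ B)
    (h : ∀ π : Measure (S × X × Y), IsOptGW (π.map fun p => (p.1, p.2.1)) σ μ →
      IsOptGW (π.map fun p => (p.1, p.2.2)) σ ν → lgwCost π ≤ B) :
    lgw σ μ ν ≤ B := by
  rcases Set.eq_empty_or_nonempty {c | ∃ π : Measure (S × X × Y),
      IsOptGW (π.map fun p => (p.1, p.2.1)) σ μ ∧ IsOptGW (π.map fun p => (p.1, p.2.2)) σ ν ∧
      c = lgwCost π} with hempty | ⟨_, π, hSX, hSY, rfl⟩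
  · rwa [lgw, hempty, Real.sInf_empty]
  · refine csInf_le_of_le ⟨0, ?_⟩ ⟨π, hSX, hSY, rfl⟩ (h π hSX hSY)
    rintro _ ⟨_, -, -, rfl⟩
    exact integral_nonneg fun p => integral_nonneg fun q => sq_nonneg _

theorem sqrt_lgw_le_gw_add_gw_general
    {S X Y : Type*}
    [MetricSpace S] [CompactSpace S] [MeasurableSpace S] [BorelSpace S]
    [MetricSpace X] [CompactSpace X] [MeasurableSpace X] [BorelSpace X]
    [MetricSpace Y] [CompactSpace Y] [MeasurableSpace Y] [BorelSpace Y]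
    (σ : Measure S) (μ : Measure X) (ν : Measure Y)
    [IsProbabilityMeasure σ] :
    Real.sqrt (lgw σ μ ν) ≤ Real.sqrt (gwSq σ μ) + Real.sqrt (gwSq σ ν) := by
  refine Real.sqrt_le_iff.mpr ⟨by positivity, lgw_le_of_forall_lgwCost_le (sq_nonneg _) ?_⟩
  intro π hSX hSY
  have := hSX.1.isFiniteMeasure
  have : IsFiniteMeasure π := Measure.isFiniteMeasure_of_map (f := fun p => (p.1, p.2.1))
    (by fun_prop)
  rw [← hSX.2, ← hSY.2, lgwCost_eq_gwCost_map_snd, ← Real.sqrt_le_left (by positivity)]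
  exact sqrt_gwCost_map_snd_le π

/-- `LGW_S(X,Y)^{1/2} ≤ GW(S,X) + GW(S,Y)`. -/
theorem sqrt_lgw_le_gw_add_gw
    {S X Y : Type*}
    [MetricSpace S] [CompactSpace S] [MeasurableSpace S] [BorelSpace S]
    [MetricSpace X] [CompactSpace X] [MeasurableSpace X] [BorelSpace X]
    [MetricSpace Y] [CompactSpace Y] [MeasurableSpace Y] [BorelSpace Y]
    (σ : Measure S) (μ : Measure X) (ν : Measure Y)
    [IsProbabilityMeasure σ] [IsProbabilityMeasure μ] [IsProbabilityMeasure ν] :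
    Real.sqrt (lgw σ μ ν) ≤ Real.sqrt (gwSq σ μ) + Real.sqrt (gwSq σ ν) :=
  sqrt_lgw_le_gw_add_gw_general σ μ ν
end

section
/- If S is the one-point metric measure space (S = {s₀}, d_S ≡ 0, σ = δ_{s₀}), then for all compact mm-spaces X and Y, LGW_S(X,Y) = GW(X,Y)², i.e. linear GW with the trivial reference space recovers the squared Gromov–Wasserstein distance. -/
open MeasureTheory Filter Topology

section Aux

variable {X Y : Type*}
    [MetricSpace X] [CompactSpace X] [MeasurableSpace X] [BorelSpace X]
    [MetricSpace Y] [CompactSpace Y] [MeasurableSpace Y] [BorelSpace Y]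

/-- GW cost of any coupling of `δ` and `μ` equals the fixed constant. -/
lemma gwCost_punit (μ : Measure X) [IsProbabilityMeasure μ]
    (π : Measure (PUnit × X)) (h : IsCoupling π (Measure.dirac PUnit.unit) μ) :
    gwCost π = ∫ x, ∫ x', dist x x' ^ 2 ∂μ ∂μ := by
  have hπuniv : π Set.univ = 1 := by
    have := congrArg (fun m : Measure PUnit => m Set.univ) h.1
    simpa [Measure.map_apply measurable_fst MeasurableSet.univ] using this
  haveI : IsProbabilityMeasure π := ⟨hπuniv⟩
  have hmeas : Measurable fun x : X × X => dist x.1 x.2 ^ 2 :=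
    (measurable_fst.dist measurable_snd).pow_const 2
  unfold gwCost
  rw [← h.2]
  rw [integral_map measurable_snd.aemeasurable]
  · refine integral_congr_ae (Filter.Eventually.of_forall fun p => ?_)
    beta_reduce
    rw [integral_map measurable_snd.aemeasurable]
    · refine integral_congr_ae (Filter.Eventually.of_forall fun q => ?_)
      have hpq : p.1 = q.1 := Subsingleton.elim _ _
      beta_reduce
      rw [hpq, dist_self, zero_sub, neg_sq]
    · exact ((hmeas.comp (measurable_const.prodMk measurable_id)).aestronglyMeasurable)
  · haveI : SFinite (π.map (Prod.snd : PUnit × X → X)) := by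
      rw [h.2]; infer_instance
    exact (StronglyMeasurable.integral_prod_right'
      (hmeas.stronglyMeasurable)).aestronglyMeasurable

lemma gwSq_punit (μ : Measure X) [IsProbabilityMeasure μ] :
    gwSq (Measure.dirac PUnit.unit) μ = ∫ x, ∫ x', dist x x' ^ 2 ∂μ ∂μ := by
  have hset : {c | ∃ π : Measure (PUnit × X),
      IsCoupling π (Measure.dirac PUnit.unit) μ ∧ c = gwCost π}
      = {∫ x, ∫ x', dist x x' ^ 2 ∂μ ∂μ} := by
    ext c
    constructor
    · rintro ⟨π, hπ, rfl⟩
      exact gwCost_punit μ π hπ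
    · rintro rfl
      have hg : Measurable (fun x : X => (PUnit.unit, x)) :=
        measurable_const.prodMk measurable_id
      have hA : (μ.map (fun x : X => (PUnit.unit, x))).map Prod.fst
          = Measure.dirac PUnit.unit := by
        rw [Measure.map_map measurable_fst hg]
        have : (Prod.fst ∘ fun x : X => (PUnit.unit, x)) = fun _ => PUnit.unit := rfl
        rw [this, Measure.map_const, measure_univ, one_smul]
      have hB : (μ.map (fun x : X => (PUnit.unit, x))).map Prod.snd = μ := by
        rw [Measure.map_map measurable_snd hg]
        have : (Prod.snd ∘ fun x : X => (PUnit.unit, x)) = id := rfl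
        rw [this, Measure.map_id]
      exact ⟨μ.map (fun x => (PUnit.unit, x)), ⟨hA, hB⟩,
        (gwCost_punit μ _ ⟨hA, hB⟩).symm⟩
  unfold gwSq
  rw [hset, csInf_singleton]

lemma isOptGW_punit_iff (μ : Measure X) [IsProbabilityMeasure μ]
    (π : Measure (PUnit × X)) :
    IsOptGW π (Measure.dirac PUnit.unit) μ ↔
      IsCoupling π (Measure.dirac PUnit.unit) μ := by
  constructor
  · exact fun h => h.1
  · intro h
    exact ⟨h, by rw [gwCost_punit μ π h, gwSq_punit μ]⟩

/-- The LGW cost only depends on the `(X,Y)`-marginal. -/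
lemma lgwCost_eq_gwCost_map (π : Measure (PUnit × X × Y)) [IsProbabilityMeasure π] :
    lgwCost π = gwCost (π.map (fun p => p.2)) := by
  have hmeas : Measurable fun q : (X × Y) × (X × Y) =>
      (dist q.1.1 q.2.1 - dist q.1.2 q.2.2) ^ 2 :=
    ((measurable_fst.fst.dist measurable_snd.fst).sub
      (measurable_fst.snd.dist measurable_snd.snd)).pow_const 2
  have hsnd : Measurable (fun p : PUnit × X × Y => p.2) := measurable_snd
  unfold lgwCost gwCost
  rw [integral_map hsnd.aemeasurable]
  · refine integral_congr_ae (Filter.Eventually.of_forall fun p => ?_)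
    beta_reduce
    rw [integral_map hsnd.aemeasurable]
    exact ((hmeas.comp (measurable_const.prodMk measurable_id)).aestronglyMeasurable)
  · haveI : SFinite (π.map (fun p : PUnit × X × Y => p.2)) :=
      inferInstance
    exact (StronglyMeasurable.integral_prod_right'
      (hmeas.stronglyMeasurable)).aestronglyMeasurable

end Aux

/-- linear GW with the one-point reference space recovers squared GW. -/
theorem lgw_punit_eq_gwSq
    {X Y : Type*}
    [MetricSpace X] [CompactSpace X] [MeasurableSpace X] [BorelSpace X]
    [MetricSpace Y] [CompactSpace Y] [MeasurableSpace Y] [BorelSpace Y]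
    (μ : Measure X) (ν : Measure Y)
    [IsProbabilityMeasure μ] [IsProbabilityMeasure ν] :
    lgw (Measure.dirac PUnit.unit) μ ν = gwSq μ ν := by
  unfold lgw gwSq
  congr 1
  ext c
  constructor
  · rintro ⟨π, h1, h2, rfl⟩
    have hπuniv : π Set.univ = 1 := by
      have h0 := h1.1.1
      have := congrArg (fun m : Measure PUnit => m Set.univ) h0
      simpa [Measure.map_apply measurable_fst MeasurableSet.univ,
        Measure.map_apply (measurable_fst.prodMk measurable_snd.fst)
          MeasurableSet.univ] using this
    haveI : IsProbabilityMeasure π := ⟨hπuniv⟩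
    refine ⟨π.map (fun p => p.2), ⟨?_, ?_⟩, ?_⟩
    · rw [Measure.map_map measurable_fst measurable_snd,
        show (Prod.fst ∘ fun p : PUnit × X × Y => p.2) = fun p => p.2.1 from rfl]
      rw [← show (Prod.snd ∘ fun p : PUnit × X × Y => (p.1, p.2.1))
          = fun p => p.2.1 from rfl,
        ← Measure.map_map measurable_snd (measurable_fst.prodMk measurable_snd.fst)]
      exact h1.1.2
    · rw [Measure.map_map measurable_snd measurable_snd,
        show (Prod.snd ∘ fun p : PUnit × X × Y => p.2) = fun p => p.2.2 from rfl]
      rw [← show (Prod.snd ∘ fun p : PUnit × X × Y => (p.1, p.2.2))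
          = fun p => p.2.2 from rfl,
        ← Measure.map_map measurable_snd (measurable_fst.prodMk measurable_snd.snd)]
      exact h2.1.2
    · exact lgwCost_eq_gwCost_map π
  · rintro ⟨π', hc, rfl⟩
    have hπ'univ : π' Set.univ = 1 := by
      have := congrArg (fun m : Measure X => m Set.univ) hc.1
      simpa [Measure.map_apply measurable_fst MeasurableSet.univ] using this
    haveI : IsProbabilityMeasure π' := ⟨hπ'univ⟩
    set f : X × Y → PUnit × X × Y := fun q => (PUnit.unit, q) with hf
    have hfm : Measurable f := measurable_const.prodMk measurable_id
    refine ⟨π'.map f, ?_, ?_, ?_⟩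
    · rw [isOptGW_punit_iff,
        Measure.map_map (measurable_fst.prodMk measurable_snd.fst) hfm]
      constructor
      · rw [Measure.map_map measurable_fst
          ((measurable_fst.prodMk measurable_snd.fst).comp hfm)]
        have : (Prod.fst ∘ ((fun p : PUnit × X × Y => (p.1, p.2.1)) ∘ f))
            = fun _ => PUnit.unit := rfl
        rw [this, Measure.map_const, measure_univ, one_smul]
      · rw [Measure.map_map measurable_snd
          ((measurable_fst.prodMk measurable_snd.fst).comp hfm)]
        exact hc.1
    · rw [isOptGW_punit_iff,
        Measure.map_map (measurable_fst.prodMk measurable_snd.snd) hfm]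
      constructor
      · rw [Measure.map_map measurable_fst
          ((measurable_fst.prodMk measurable_snd.snd).comp hfm)]
        have : (Prod.fst ∘ ((fun p : PUnit × X × Y => (p.1, p.2.2)) ∘ f))
            = fun _ => PUnit.unit := rfl
        rw [this, Measure.map_const, measure_univ, one_smul]
      · rw [Measure.map_map measurable_snd
          ((measurable_fst.prodMk measurable_snd.snd).comp hfm)]
        exact hc.2
    · haveI : IsProbabilityMeasure (π'.map f) := Measure.isProbabilityMeasure_map hfm.aemeasurable
      rw [lgwCost_eq_gwCost_map, Measure.map_map measurable_snd hfm]
      have : ((fun p : PUnit × X × Y => p.2) ∘ f) = id := rfl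
      rw [this, Measure.map_id]
end

section
/- (Rescaled optimality estimate.) With c_ε as above and π_ε optimal for the ε-problem, for every three-plan π̃ whose (S,X)-marginal and (S,Y)-marginal are optimal GW plans, one has ∬ (d_X(x,x') − d_Y(y,y'))² dπ_ε dπ_ε ≤ ∬ (d_X(x,x') − d_Y(y,y'))² dπ̃ dπ̃ for every ε > 0. -/
open MeasureTheory Filter Topology

/-- The cost `c_ε` on `(S × X × Y)²`. -/
noncomputable def cEps {S X Y : Type*} [PseudoMetricSpace S] [PseudoMetricSpace X]
    [PseudoMetricSpace Y] (ε : ℝ) (p q : S × X × Y) : ℝ :=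
  ε * (dist p.2.1 q.2.1 - dist p.2.2 q.2.2) ^ 2
    + (dist p.1 q.1 - dist p.2.1 q.2.1) ^ 2
    + (dist p.1 q.1 - dist p.2.2 q.2.2) ^ 2

/-- The quadratic functional `π ↦ ∬ c_ε dπ dπ` of the ε-multi-marginal GW problem. -/
noncomputable def mgwEps {S X Y : Type*} [PseudoMetricSpace S] [PseudoMetricSpace X]
    [PseudoMetricSpace Y] [MeasurableSpace S] [MeasurableSpace X] [MeasurableSpace Y]
    (ε : ℝ) (π : Measure (S × X × Y)) : ℝ :=
  ∫ p, ∫ q, cEps ε p q ∂π ∂π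

/-- `π ∈ Π(σ, μ, ν)`: three-marginal coupling. -/
def IsTripleCoupling {S X Y : Type*} [MeasurableSpace S] [MeasurableSpace X]
    [MeasurableSpace Y] (π : Measure (S × X × Y))
    (σ : Measure S) (μ : Measure X) (ν : Measure Y) : Prop :=
  π.map Prod.fst = σ ∧ π.map (fun p => p.2.1) = μ ∧ π.map (fun p => p.2.2) = ν

/-! Since `c_ε = ε (d_X − d_Y)² + (d_S − d_X)² + (d_S − d_Y)²` and all three terms are bounded
and continuous on a compact space, `∬ c_ε dπ dπ` splits as `ε · lgwCost π` plus the GW costs of the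
`(S,X)`- and `(S,Y)`-marginals of `π`. The three-plan `π̃` is admissible for the `ε`-problem and its
marginals have the least possible GW costs, so comparing the two splittings leaves
`ε · lgwCost π_ε ≤ ε · lgwCost π̃`. -/

theorem gwCost_nonneg {X Y : Type*} [PseudoMetricSpace X] [PseudoMetricSpace Y]
    [MeasurableSpace X] [MeasurableSpace Y] (π : Measure (X × Y)) : 0 ≤ gwCost π :=
  integral_nonneg fun _ => integral_nonneg fun _ => sq_nonneg _

theorem gwSq_le_gwCost {X Y : Type*} [PseudoMetricSpace X] [PseudoMetricSpace Y]
    [MeasurableSpace X] [MeasurableSpace Y] {μ : Measure X} {ν : Measure Y}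
    {π : Measure (X × Y)} (h : IsCoupling π μ ν) : gwSq μ ν ≤ gwCost π :=
  csInf_le ⟨0, by rintro _ ⟨π', -, rfl⟩; exact gwCost_nonneg π'⟩ ⟨π, h, rfl⟩

theorem isTripleCoupling_iff {S X Y : Type*} [MeasurableSpace S] [MeasurableSpace X]
    [MeasurableSpace Y] {π : Measure (S × X × Y)} {σ : Measure S} {μ : Measure X}
    {ν : Measure Y} :
    IsTripleCoupling π σ μ ν ↔ IsCoupling (π.map fun p => (p.1, p.2.1)) σ μ ∧
      IsCoupling (π.map fun p => (p.1, p.2.2)) σ ν := by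
  have hSX : Measurable fun p : S × X × Y => (p.1, p.2.1) := by fun_prop
  have hSY : Measurable fun p : S × X × Y => (p.1, p.2.2) := by fun_prop
  simp only [IsTripleCoupling, IsCoupling, Measure.map_map measurable_fst hSX,
    Measure.map_map measurable_snd hSX, Measure.map_map measurable_fst hSY,
    Measure.map_map measurable_snd hSY, Function.comp_def]
  tauto

theorem integral_integral_map {α β E : Type*} [MeasurableSpace α] [MeasurableSpace β]
    [NormedAddCommGroup E] [NormedSpace ℝ E] {π : Measure α} [SFinite π] {Φ : α → β}
    (hΦ : Measurable Φ) {g : β × β → E} (hg : StronglyMeasurable g) :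
    ∫ b, ∫ b', g (b, b') ∂π.map Φ ∂π.map Φ = ∫ a, ∫ a', g (Φ a, Φ a') ∂π ∂π := by
  rw [integral_map hΦ.aemeasurable hg.integral_prod_right'.aestronglyMeasurable]
  refine integral_congr_ae (ae_of_all _ fun a => ?_)
  exact integral_map hΦ.aemeasurable
    (hg.comp_measurable measurable_prodMk_left).aestronglyMeasurable

theorem integral_integral_add_uncurry {α E : Type*} [MeasurableSpace α] [NormedAddCommGroup E]
    [NormedSpace ℝ E] {π : Measure α} [SFinite π] {f g : α → α → E}
    (hf : Integrable (Function.uncurry f) (π.prod π))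
    (hg : Integrable (Function.uncurry g) (π.prod π)) :
    ∫ p, ∫ q, f p q + g p q ∂π ∂π = ∫ p, ∫ q, f p q ∂π ∂π + ∫ p, ∫ q, g p q ∂π ∂π :=
  integral_integral_add hf hg

theorem gwCost_map_s9 {α X Y : Type*} [MeasurableSpace α] [PseudoMetricSpace X]
    [SecondCountableTopology X] [MeasurableSpace X] [BorelSpace X] [PseudoMetricSpace Y]
    [SecondCountableTopology Y] [MeasurableSpace Y] [BorelSpace Y]
    {π : Measure α} [SFinite π] {Φ : α → X × Y} (hΦ : Measurable Φ) :
    gwCost (π.map Φ) =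
      ∫ a, ∫ a', (dist (Φ a).1 (Φ a').1 - dist (Φ a).2 (Φ a').2) ^ 2 ∂π ∂π :=
  integral_integral_map hΦ (by fun_prop : Continuous fun z : (X × Y) × (X × Y) =>
    (dist z.1.1 z.2.1 - dist z.1.2 z.2.2) ^ 2).stronglyMeasurable

theorem mgwEps_eq {S X Y : Type*} [PseudoMetricSpace S] [CompactSpace S] [MeasurableSpace S]
    [BorelSpace S] [PseudoMetricSpace X] [CompactSpace X] [MeasurableSpace X] [BorelSpace X]
    [PseudoMetricSpace Y] [CompactSpace Y] [MeasurableSpace Y] [BorelSpace Y]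
    (ε : ℝ) (π : Measure (S × X × Y)) [IsFiniteMeasure π] :
    mgwEps ε π = ε * lgwCost π + gwCost (π.map fun p => (p.1, p.2.1)) +
      gwCost (π.map fun p => (p.1, p.2.2)) := by
  have hint {f : S × X × Y → S × X × Y → ℝ} (hf : Continuous fun z : _ × _ => f z.1 z.2) :
      Integrable (Function.uncurry f) (π.prod π) :=
    hf.integrable_of_hasCompactSupport (.of_compactSpace _)
  simp only [mgwEps, cEps]
  rw [integral_integral_add_uncurry (hint (by fun_prop)) (hint (by fun_prop)),
    integral_integral_add_uncurry (hint (by fun_prop)) (hint (by fun_prop))]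
  simp only [integral_const_mul]
  rw [gwCost_map_s9 (by fun_prop), gwCost_map_s9 (by fun_prop)]
  rfl

theorem rescaled_optimality_general
    {S X Y : Type*}
    [MetricSpace S] [CompactSpace S] [MeasurableSpace S] [BorelSpace S]
    [MetricSpace X] [CompactSpace X] [MeasurableSpace X] [BorelSpace X]
    [MetricSpace Y] [CompactSpace Y] [MeasurableSpace Y] [BorelSpace Y]
    (σ : Measure S) (μ : Measure X) (ν : Measure Y)
    (ε : ℝ) (hε : 0 < ε)
    (πε : Measure (S × X × Y)) [IsProbabilityMeasure πε]
    (hcoup : IsTripleCoupling πε σ μ ν)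
    (hopt : ∀ π' : Measure (S × X × Y), IsTripleCoupling π' σ μ ν →
      mgwEps ε πε ≤ mgwEps ε π')
    (πt : Measure (S × X × Y)) [IsProbabilityMeasure πt]
    (h₁ : IsOptGW (πt.map (fun p => (p.1, p.2.1))) σ μ)
    (h₂ : IsOptGW (πt.map (fun p => (p.1, p.2.2))) σ ν) :
    lgwCost πε ≤ lgwCost πt := by
  obtain ⟨hcoupX, hcoupY⟩ := isTripleCoupling_iff.1 hcoup
  have hmgw := hopt πt (isTripleCoupling_iff.2 ⟨h₁.1, h₂.1⟩)
  rw [mgwEps_eq, mgwEps_eq, h₁.2, h₂.2] at hmgw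
  have hX := gwSq_le_gwCost hcoupX
  have hY := gwSq_le_gwCost hcoupY
  exact le_of_mul_le_mul_left (by linarith) hε

/-- rescaled optimality estimate: the minimizer `π_ε` of the ε-problem has
LGW objective at most that of any three-plan with optimal marginals. -/
theorem rescaled_optimality
    {S X Y : Type*}
    [MetricSpace S] [CompactSpace S] [MeasurableSpace S] [BorelSpace S]
    [MetricSpace X] [CompactSpace X] [MeasurableSpace X] [BorelSpace X]
    [MetricSpace Y] [CompactSpace Y] [MeasurableSpace Y] [BorelSpace Y]
    (σ : Measure S) (μ : Measure X) (ν : Measure Y)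
    [IsProbabilityMeasure σ] [IsProbabilityMeasure μ] [IsProbabilityMeasure ν]
    (ε : ℝ) (hε : 0 < ε)
    (πε : Measure (S × X × Y)) [IsProbabilityMeasure πε]
    (hcoup : IsTripleCoupling πε σ μ ν)
    (hopt : ∀ π' : Measure (S × X × Y), IsTripleCoupling π' σ μ ν →
      mgwEps ε πε ≤ mgwEps ε π')
    (πt : Measure (S × X × Y)) [IsProbabilityMeasure πt]
    (h₁ : IsOptGW (πt.map (fun p => (p.1, p.2.1))) σ μ)
    (h₂ : IsOptGW (πt.map (fun p => (p.1, p.2.2))) σ ν) :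
    lgwCost πε ≤ lgwCost πt :=
  rescaled_optimality_general σ μ ν ε hε πε hcoup hopt πt h₁ h₂
end

section
/- (Free-support barycenter, two-marginal case.) Let X₁ = (X₁,d₁,μ₁), X₂ = (X₂,d₂,μ₂) be compact mm-spaces and ρ₁, ρ₂ ≥ 0 with ρ₁+ρ₂ = 1. Let π* ∈ Π(μ₁,μ₂) minimize ∬ ρ₁ρ₂ |d₁(x₁,x₁') − d₂(x₂,x₂')|² dπ dπ. Then the mm-space S* = (X₁ × X₂, d*, π*) with d*((x₁,x₂),(x₁',x₂')) = ρ₁ d₁(x₁,x₁') + ρ₂ d₂(x₂,x₂') minimizes S ↦ ρ₁ GW(S, X₁)² + ρ₂ GW(S, X₂)² over all compact mm-spaces S. -/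
/-!
Let `C = ∬ (d₁ - d₂)² dπ* dπ*`. Since `d* - dᵢ = ρⱼ (dⱼ - dᵢ)` when `ρ₁ + ρ₂ = 1`, the graph
coupling `p ↦ (p, pᵢ)` of `π*` with `μᵢ` costs `ρⱼ² C`, so the value at `S*` is at most
`ρ₁ ρ₂² C + ρ₂ ρ₁² C = ρ₁ ρ₂ C`. Conversely, two couplings `γᵢ` of `σ` with `μᵢ` can be glued along
`σ` (by disintegrating both over `S`) into a measure `τ` on `S × (X₁ × X₂)`, whose image on
`X₁ × X₂` is a coupling `π` of `μ₁` and `μ₂`. Integrating the identity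
`ρ₁ (s - a)² + ρ₂ (s - b)² - ρ₁ ρ₂ (a - b)² = (s - ρ₁ a - ρ₂ b)²` against `τ ⊗ τ` gives
`ρ₁ cost γ₁ + ρ₂ cost γ₂ ≥ ρ₁ ρ₂ cost π ≥ ρ₁ ρ₂ C`, the last step by optimality of `π*`.
-/

open MeasureTheory Filter Topology

/-- The GW cost of a plan, for arbitrary (distance-like) cost kernels `dA, dB`. -/
noncomputable def gwCostD {A B : Type*} [MeasurableSpace A] [MeasurableSpace B]
    (dA : A → A → ℝ) (dB : B → B → ℝ) (π : Measure (A × B)) : ℝ :=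
  ∫ p, ∫ q, (dA p.1 q.1 - dB p.2 q.2) ^ 2 ∂π ∂π

/-- The squared GW distance between gauged measure spaces `(A, dA, μ)` and `(B, dB, ν)`. -/
noncomputable def gwSqD {A B : Type*} [MeasurableSpace A] [MeasurableSpace B]
    (dA : A → A → ℝ) (dB : B → B → ℝ) (μ : Measure A) (ν : Measure B) : ℝ :=
  sInf {c | ∃ π : Measure (A × B), IsCoupling π μ ν ∧ c = gwCostD dA dB π}

open ProbabilityTheory

lemma mul_mul_sq_sub_le_of_add_eq_one {a b : ℝ} (hab : a + b = 1) (u v w : ℝ) :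
    a * b * (v - w) ^ 2 ≤ a * (u - v) ^ 2 + b * (u - w) ^ 2 := by
  obtain rfl : a = 1 - b := by linarith
  nlinarith [sq_nonneg (u - (1 - b) * v - b * w)]

lemma Continuous.integrable_of_compactSpace {A : Type*} [TopologicalSpace A] [CompactSpace A]
    [MeasurableSpace A] [OpensMeasurableSpace A] {μ : Measure A} [IsFiniteMeasure μ]
    {f : A → ℝ} (hf : Continuous f) : Integrable f μ :=
  hf.integrable_of_hasCompactSupport (HasCompactSupport.of_compactSpace f)

section Coupling

variable {X Y : Type*} [MeasurableSpace X] [MeasurableSpace Y]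

lemma IsCoupling.isProbabilityMeasure {π : Measure (X × Y)} {μ : Measure X} {ν : Measure Y}
    [IsProbabilityMeasure μ] (h : IsCoupling π μ ν) : IsProbabilityMeasure π :=
  have : IsProbabilityMeasure (π.map Prod.fst) := h.1 ▸ ‹_›
  Measure.isProbabilityMeasure_of_map Prod.fst

lemma isCoupling_prod (μ : Measure X) (ν : Measure Y) [IsProbabilityMeasure μ]
    [IsProbabilityMeasure ν] : IsCoupling (μ.prod ν) μ ν :=
  ⟨Measure.fst_prod, Measure.snd_prod⟩

lemma isCoupling_map_graph (μ : Measure X) {f : X → Y} (hf : Measurable f) :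
    IsCoupling (μ.map fun x => (x, f x)) μ (μ.map f) := by
  have hgraph : Measurable fun x => (x, f x) := measurable_id.prodMk hf
  constructor
  · rw [Measure.map_map measurable_fst hgraph]
    exact Measure.map_id
  · rw [Measure.map_map measurable_snd hgraph]
    rfl

end Coupling

section GromovWasserstein

variable {A B : Type*} [MeasurableSpace A] [MeasurableSpace B] {dA : A → A → ℝ} {dB : B → B → ℝ}
  {μ : Measure A} {ν : Measure B}

lemma gwCostD_nonneg (π : Measure (A × B)) : 0 ≤ gwCostD dA dB π :=
  integral_nonneg fun _ => integral_nonneg fun _ => sq_nonneg _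

lemma gwSqD_le_gwCostD {π : Measure (A × B)} (hπ : IsCoupling π μ ν) :
    gwSqD dA dB μ ν ≤ gwCostD dA dB π :=
  csInf_le ⟨0, by rintro _ ⟨π, -, rfl⟩; exact gwCostD_nonneg π⟩ ⟨π, hπ, rfl⟩

lemma le_mul_gwSqD [IsProbabilityMeasure μ] [IsProbabilityMeasure ν] {c ρ : ℝ} (hρ : 0 ≤ ρ)
    (h : ∀ π, IsCoupling π μ ν → c ≤ ρ * gwCostD dA dB π) : c ≤ ρ * gwSqD dA dB μ ν := by
  rw [gwSqD, ← smul_eq_mul, ← Real.sInf_smul_of_nonneg hρ]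
  refine le_csInf (Set.Nonempty.smul_set ⟨_, μ.prod ν, isCoupling_prod μ ν, rfl⟩) ?_
  rintro _ ⟨_, ⟨π, hπ, rfl⟩, rfl⟩
  exact h π hπ

lemma le_mul_gwSqD_add_mul_gwSqD {S X Y : Type*} [MeasurableSpace S] [MeasurableSpace X]
    [MeasurableSpace Y] {dS : S → S → ℝ} {dX : X → X → ℝ} {dY : Y → Y → ℝ} {σ : Measure S}
    {μ : Measure X} {ν : Measure Y} [IsProbabilityMeasure σ] [IsProbabilityMeasure μ]
    [IsProbabilityMeasure ν] {c ρ₁ ρ₂ : ℝ} (h₁ : 0 ≤ ρ₁) (h₂ : 0 ≤ ρ₂)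
    (h : ∀ γ₁, IsCoupling γ₁ σ μ → ∀ γ₂, IsCoupling γ₂ σ ν →
      c ≤ ρ₁ * gwCostD dS dX γ₁ + ρ₂ * gwCostD dS dY γ₂) :
    c ≤ ρ₁ * gwSqD dS dX σ μ + ρ₂ * gwSqD dS dY σ ν := by
  have h₂' : ∀ γ₂, IsCoupling γ₂ σ ν → c - ρ₁ * gwSqD dS dX σ μ ≤ ρ₂ * gwCostD dS dY γ₂ := by
    intro γ₂ hγ₂
    have := le_mul_gwSqD h₁ fun γ₁ hγ₁ => sub_le_iff_le_add.2 (h γ₁ hγ₁ γ₂ hγ₂)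
    linarith
  linarith [le_mul_gwSqD h₂ h₂']

end GromovWasserstein

lemma continuous_gwCostD_integrand {A B : Type*} [TopologicalSpace A] [TopologicalSpace B]
    {dA : A → A → ℝ} {dB : B → B → ℝ} (hA : Continuous (Function.uncurry dA))
    (hB : Continuous (Function.uncurry dB)) :
    Continuous fun z : (A × B) × (A × B) => (dA z.1.1 z.2.1 - dB z.1.2 z.2.2) ^ 2 :=
  ((hA.comp (continuous_fst.fst.prodMk continuous_snd.fst)).sub
    (hB.comp (continuous_fst.snd.prodMk continuous_snd.snd))).pow 2

section Compact

variable {A B C : Type*} [MetricSpace A] [CompactSpace A] [MeasurableSpace A] [BorelSpace A]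
  [MetricSpace B] [CompactSpace B] [MeasurableSpace B] [BorelSpace B]
  [MetricSpace C] [CompactSpace C] [MeasurableSpace C] [BorelSpace C]
  {dA : A → A → ℝ} {dB : B → B → ℝ}

lemma gwCostD_eq_integral_prod (hA : Continuous (Function.uncurry dA))
    (hB : Continuous (Function.uncurry dB)) (π : Measure (A × B)) [IsFiniteMeasure π] :
    gwCostD dA dB π = ∫ z, (dA z.1.1 z.2.1 - dB z.1.2 z.2.2) ^ 2 ∂(π.prod π) :=
  integral_integral (continuous_gwCostD_integrand hA hB).integrable_of_compactSpace

lemma gwCostD_map_eq_integral_prod (hA : Continuous (Function.uncurry dA))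
    (hB : Continuous (Function.uncurry dB)) {g : C → A × B} (hg : Continuous g)
    (γ : Measure C) [IsFiniteMeasure γ] :
    gwCostD dA dB (γ.map g) =
      ∫ z, (dA (g z.1).1 (g z.2).1 - dB (g z.1).2 (g z.2).2) ^ 2 ∂(γ.prod γ) := by
  rw [gwCostD_eq_integral_prod hA hB, Measure.map_prod_map _ _ hg.measurable hg.measurable,
    integral_map (by fun_prop)
      (continuous_gwCostD_integrand hA hB).aestronglyMeasurable]
  rfl

end Compact

section Barycenter

variable {X₁ X₂ : Type*}
  [MetricSpace X₁] [CompactSpace X₁] [MeasurableSpace X₁] [BorelSpace X₁]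
  [MetricSpace X₂] [CompactSpace X₂] [MeasurableSpace X₂] [BorelSpace X₂]
  {ρ₁ ρ₂ : ℝ}

lemma gwSqD_le_sq_mul_gwCostD_of_map_fst (hsum : ρ₁ + ρ₂ = 1) {μ₁ : Measure X₁}
    (π : Measure (X₁ × X₂)) [IsFiniteMeasure π] (hπ : π.map Prod.fst = μ₁) :
    gwSqD (fun p q : X₁ × X₂ => ρ₁ * dist p.1 q.1 + ρ₂ * dist p.2 q.2)
        (fun x x' : X₁ => dist x x') π μ₁ ≤
      ρ₂ ^ 2 * gwCostD (fun x x' : X₁ => dist x x') (fun y y' : X₂ => dist y y') π := by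
  obtain rfl : ρ₁ = 1 - ρ₂ := by linarith
  calc _ ≤ gwCostD (fun p q : X₁ × X₂ => (1 - ρ₂) * dist p.1 q.1 + ρ₂ * dist p.2 q.2)
          (fun x x' : X₁ => dist x x') (π.map fun p => (p, p.1)) :=
        gwSqD_le_gwCostD (hπ ▸ isCoupling_map_graph π measurable_fst)
    _ = _ := by
      rw [gwCostD_map_eq_integral_prod (by fun_prop) continuous_dist (by fun_prop),
        gwCostD_eq_integral_prod continuous_dist continuous_dist, ← integral_const_mul]
      congr 1 with z
      ring

lemma gwSqD_le_sq_mul_gwCostD_of_map_snd (hsum : ρ₁ + ρ₂ = 1) {μ₂ : Measure X₂}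
    (π : Measure (X₁ × X₂)) [IsFiniteMeasure π] (hπ : π.map Prod.snd = μ₂) :
    gwSqD (fun p q : X₁ × X₂ => ρ₁ * dist p.1 q.1 + ρ₂ * dist p.2 q.2)
        (fun y y' : X₂ => dist y y') π μ₂ ≤
      ρ₁ ^ 2 * gwCostD (fun x x' : X₁ => dist x x') (fun y y' : X₂ => dist y y') π := by
  obtain rfl : ρ₂ = 1 - ρ₁ := by linarith
  calc _ ≤ gwCostD (fun p q : X₁ × X₂ => ρ₁ * dist p.1 q.1 + (1 - ρ₁) * dist p.2 q.2)
          (fun y y' : X₂ => dist y y') (π.map fun p => (p, p.2)) :=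
        gwSqD_le_gwCostD (hπ ▸ isCoupling_map_graph π measurable_snd)
    _ = _ := by
      rw [gwCostD_map_eq_integral_prod (by fun_prop) continuous_dist (by fun_prop),
        gwCostD_eq_integral_prod continuous_dist continuous_dist, ← integral_const_mul]
      congr 1 with z
      ring

end Barycenter

section Gluing

variable {S X Y : Type*} [MeasurableSpace S] [MeasurableSpace X] [MeasurableSpace Y]
  [StandardBorelSpace X] [Nonempty X] [StandardBorelSpace Y] [Nonempty Y]
  (γ₁ : Measure (S × X)) (γ₂ : Measure (S × Y)) [IsFiniteMeasure γ₁] [IsFiniteMeasure γ₂]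

noncomputable def gluing : Measure (S × (X × Y)) :=
  γ₁.fst ⊗ₘ (γ₁.condKernel ×ₖ γ₂.condKernel)

instance isProbabilityMeasure_gluing [IsProbabilityMeasure γ₁] :
    IsProbabilityMeasure (gluing γ₁ γ₂) := by
  unfold gluing
  infer_instance

lemma map_fst_gluing : (gluing γ₁ γ₂).map (Prod.map id Prod.fst) = γ₁ := by
  rw [gluing, ← Measure.compProd_map measurable_fst, ← Kernel.fst_eq, Kernel.fst_prod,
    Measure.disintegrate]

lemma map_snd_gluing (h : γ₁.fst = γ₂.fst) : (gluing γ₁ γ₂).map (Prod.map id Prod.snd) = γ₂ := by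
  rw [gluing, ← Measure.compProd_map measurable_snd, ← Kernel.snd_eq, Kernel.snd_prod, h,
    Measure.disintegrate]

lemma isCoupling_map_snd_gluing {σ : Measure S} {μ : Measure X} {ν : Measure Y}
    (h₁ : IsCoupling γ₁ σ μ) (h₂ : IsCoupling γ₂ σ ν) :
    IsCoupling ((gluing γ₁ γ₂).map Prod.snd) μ ν := by
  constructor
  · rw [Measure.map_map measurable_fst measurable_snd,
      show Prod.fst ∘ Prod.snd = Prod.snd ∘ Prod.map (id : S → S) (Prod.fst : X × Y → X) from rfl,
      ← Measure.map_map measurable_snd (by fun_prop), map_fst_gluing]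
    exact h₁.2
  · rw [Measure.map_map measurable_snd measurable_snd,
      show Prod.snd ∘ Prod.snd = Prod.snd ∘ Prod.map (id : S → S) (Prod.snd : X × Y → Y) from rfl,
      ← Measure.map_map measurable_snd (by fun_prop), map_snd_gluing γ₁ γ₂ (h₁.1.trans h₂.1.symm)]
    exact h₂.2

end Gluing

lemma mul_mul_gwCostD_map_snd_le {S X Y : Type*}
    [MetricSpace S] [CompactSpace S] [MeasurableSpace S] [BorelSpace S]
    [MetricSpace X] [CompactSpace X] [MeasurableSpace X] [BorelSpace X]
    [MetricSpace Y] [CompactSpace Y] [MeasurableSpace Y] [BorelSpace Y]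
    {ρ₁ ρ₂ : ℝ} (hsum : ρ₁ + ρ₂ = 1) (τ : Measure (S × (X × Y))) [IsFiniteMeasure τ] :
    ρ₁ * ρ₂ * gwCostD (fun x x' : X => dist x x') (fun y y' : Y => dist y y') (τ.map Prod.snd) ≤
      ρ₁ * gwCostD (fun s s' : S => dist s s') (fun x x' : X => dist x x')
          (τ.map (Prod.map id Prod.fst)) +
        ρ₂ * gwCostD (fun s s' : S => dist s s') (fun y y' : Y => dist y y')
          (τ.map (Prod.map id Prod.snd)) := by
  rw [gwCostD_map_eq_integral_prod continuous_dist continuous_dist continuous_snd,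
    gwCostD_map_eq_integral_prod continuous_dist continuous_dist (by fun_prop),
    gwCostD_map_eq_integral_prod continuous_dist continuous_dist (by fun_prop),
    ← integral_const_mul, ← integral_const_mul, ← integral_const_mul,
    ← integral_add (Continuous.integrable_of_compactSpace (by fun_prop))
      (Continuous.integrable_of_compactSpace (by fun_prop))]
  exact integral_mono (Continuous.integrable_of_compactSpace (by fun_prop))
    (Continuous.integrable_of_compactSpace (by fun_prop))
    fun z => mul_mul_sq_sub_le_of_add_eq_one hsum _ _ _

/-- free-support GW barycenter (two-marginal case): the mm-space
`(X₁ × X₂, ρ₁ d₁ + ρ₂ d₂, π*)` built from a minimizer `π*` of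
`∬ ρ₁ρ₂ |d₁ − d₂|² dπ dπ` over `Π(μ₁,μ₂)` minimizes
`S ↦ ρ₁ GW(S,X₁)² + ρ₂ GW(S,X₂)²` over all compact mm-spaces `S`. -/
theorem free_support_barycenter
    {X₁ X₂ : Type*}
    [MetricSpace X₁] [CompactSpace X₁] [MeasurableSpace X₁] [BorelSpace X₁]
    [MetricSpace X₂] [CompactSpace X₂] [MeasurableSpace X₂] [BorelSpace X₂]
    (μ₁ : Measure X₁) (μ₂ : Measure X₂)
    [IsProbabilityMeasure μ₁] [IsProbabilityMeasure μ₂]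
    (ρ₁ ρ₂ : ℝ) (h₁ : 0 ≤ ρ₁) (h₂ : 0 ≤ ρ₂) (hsum : ρ₁ + ρ₂ = 1)
    (πstar : Measure (X₁ × X₂)) (hcoup : IsCoupling πstar μ₁ μ₂)
    (hopt : ∀ π : Measure (X₁ × X₂), IsCoupling π μ₁ μ₂ →
      (∫ p, ∫ q, ρ₁ * ρ₂ * (dist p.1 q.1 - dist p.2 q.2) ^ 2 ∂πstar ∂πstar) ≤
      (∫ p, ∫ q, ρ₁ * ρ₂ * (dist p.1 q.1 - dist p.2 q.2) ^ 2 ∂π ∂π)) :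
    ∀ {S : Type*} [MetricSpace S] [CompactSpace S] [MeasurableSpace S] [BorelSpace S]
      (σ : Measure S), IsProbabilityMeasure σ →
      ρ₁ * gwSqD (fun p q : X₁ × X₂ => ρ₁ * dist p.1 q.1 + ρ₂ * dist p.2 q.2)
            (fun x x' : X₁ => dist x x') πstar μ₁
        + ρ₂ * gwSqD (fun p q : X₁ × X₂ => ρ₁ * dist p.1 q.1 + ρ₂ * dist p.2 q.2)
            (fun x x' : X₂ => dist x x') πstar μ₂
      ≤ ρ₁ * gwSqD (fun s s' : S => dist s s') (fun x x' : X₁ => dist x x') σ μ₁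
        + ρ₂ * gwSqD (fun s s' : S => dist s s') (fun x x' : X₂ => dist x x') σ μ₂ := by
  intro S _ _ _ _ σ _
  have := hcoup.isProbabilityMeasure
  have := nonempty_of_isProbabilityMeasure μ₁
  have := nonempty_of_isProbabilityMeasure μ₂
  set C := gwCostD (fun x x' : X₁ => dist x x') (fun y y' : X₂ => dist y y') πstar
  have hopt' (π : Measure (X₁ × X₂)) (hπ : IsCoupling π μ₁ μ₂) :
      ρ₁ * ρ₂ * C ≤
        ρ₁ * ρ₂ * gwCostD (fun x x' : X₁ => dist x x') (fun y y' : X₂ => dist y y') π := by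
    have h := hopt π hπ
    simp only [integral_const_mul] at h
    exact h
  calc _ ≤ ρ₁ * (ρ₂ ^ 2 * C) + ρ₂ * (ρ₁ ^ 2 * C) := by
        gcongr
        exacts [gwSqD_le_sq_mul_gwCostD_of_map_fst hsum πstar hcoup.1,
          gwSqD_le_sq_mul_gwCostD_of_map_snd hsum πstar hcoup.2]
    _ = ρ₁ * ρ₂ * C := by linear_combination ρ₁ * ρ₂ * C * hsum
    _ ≤ _ := le_mul_gwSqD_add_mul_gwSqD h₁ h₂ fun γ₁ hγ₁ γ₂ hγ₂ => by
        have := hγ₁.isProbabilityMeasure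
        have := hγ₂.isProbabilityMeasure
        calc ρ₁ * ρ₂ * C
            ≤ ρ₁ * ρ₂ * gwCostD (fun x x' : X₁ => dist x x') (fun y y' : X₂ => dist y y')
                ((gluing γ₁ γ₂).map Prod.snd) := hopt' _ (isCoupling_map_snd_gluing γ₁ γ₂ hγ₁ hγ₂)
          _ ≤ _ := mul_mul_gwCostD_map_snd_le hsum _
          _ = _ := by rw [map_fst_gluing, map_snd_gluing γ₁ γ₂ (hγ₁.1.trans hγ₂.1.symm)]
end
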